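/- The multi-edge hidden time-reversal generator is a Markov jump-process generator (Theorem 'unitary2'): the matrix W̃ := P * (M Q)ᵀ * P⁻¹ has nonnegative off-diagonal entries and every column of W̃ sums to zero (i.e. W̃ is a MJPG); moreover W̃ = W_mar + P * (W_hid)ᵀ * P⁻¹. -/

import Mathlib

/-!
The `(i, j)` entry of `P (M Q)ᵀ P⁻¹` is `p i * (M Q) j i / p j`. On an observable edge the tilt by
the effective affinity `Q μ` makes this exactly the forward rate `W i j`; elsewhere it is the
time-reversed hidden rate. This is `W̃ = W_mar + P W_hidᵀ P⁻¹`. The marginal generator is a sum of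
two-state jump generators, one pair per observable edge (distinctness of the edges prevents double
counting on the diagonal), so its columns sum to zero, and the `j`-th column of `P W_hidᵀ P⁻¹` sums
to `(W_hid p) j / p j = 0` because `p` is stalling.
-/

open Matrix Finset

section Similarity

variable {ι K : Type*} [Fintype ι] [DecidableEq ι] [Field K] {p : ι → K}

lemma inv_diagonal_of_ne_zero (hp : ∀ i, p i ≠ 0) : (diagonal p)⁻¹ = diagonal p⁻¹ :=
  inv_eq_right_inv <| by
    rw [diagonal_mul_diagonal, ← diagonal_one]
    exact congrArg diagonal (funext fun i => mul_inv_cancel₀ (hp i))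

lemma diagonal_mul_transpose_mul_inv_diagonal_apply (hp : ∀ i, p i ≠ 0)
    (A : Matrix ι ι K) (i j : ι) :
    (diagonal p * Aᵀ * (diagonal p)⁻¹) i j = p i * A j i / p j := by
  rw [inv_diagonal_of_ne_zero hp, mul_diagonal, diagonal_mul, transpose_apply, Pi.inv_apply,
    div_eq_mul_inv]

lemma sum_diagonal_mul_transpose_mul_inv_diagonal_apply (hp : ∀ i, p i ≠ 0)
    (A : Matrix ι ι K) (j : ι) :
    ∑ i, (diagonal p * Aᵀ * (diagonal p)⁻¹) i j = (A *ᵥ p) j / p j := by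
  simp only [diagonal_mul_transpose_mul_inv_diagonal_apply hp, ← sum_div, mulVec, dotProduct,
    mul_comm]

end Similarity

/-- The generator of jumps from `b` to `a` at rate `r`. -/
def jumpGenerator {ι R : Type*} [DecidableEq ι] [Ring R] (a b : ι) (r : R) : Matrix ι ι R :=
  single a b r - single b b r

lemma sum_jumpGenerator_apply {ι R : Type*} [Fintype ι] [DecidableEq ι] [Ring R]
    (a b : ι) (r : R) (j : ι) : ∑ i, jumpGenerator a b r i j = 0 := by
  simp [jumpGenerator, single_apply, ite_and]

lemma mul_mul_exp_log_div_eq {a b x y : ℝ} (ha : 0 < a) (hb : 0 < b) (hx : 0 < x) (hy : 0 < y) :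
    x * (b * Real.exp (Real.log (a * y / (b * x)))) / y = a := by
  rw [Real.exp_log (by positivity)]
  field_simp

section Edges

variable {ι κ : Type*} {ei ej : κ → ι}

variable (ei ej) in
lemma edge_trichotomy (i j : ι) :
    (∃ ν, i = ei ν ∧ j = ej ν) ∨ (∃ ν, i = ej ν ∧ j = ei ν) ∨
      ∀ μ, ¬(i = ei μ ∧ j = ej μ) ∧ ¬(i = ej μ ∧ j = ei μ) := by
  grind

lemma eq_of_edge_eq [DecidableEq ι]
    (hdist : ∀ μ ν, μ ≠ ν → ({ei μ, ej μ} : Finset ι) ≠ {ei ν, ej ν})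
    {μ ν : κ} (h : (ei μ = ei ν ∧ ej μ = ej ν) ∨ (ei μ = ej ν ∧ ej μ = ei ν)) : μ = ν := by
  by_contra hne
  apply hdist μ ν hne
  rcases h with ⟨h1, h2⟩ | ⟨h1, h2⟩
  · rw [h1, h2]
  · rw [h1, h2, pair_comm]

theorem sub_eq_sum_jumpGenerator {R : Type*} [DecidableEq ι] [Fintype κ] [Ring R]
    (W Whid : Matrix ι ι R) (hij : ∀ μ, ei μ ≠ ej μ)
    (hdist : ∀ μ ν, μ ≠ ν → ({ei μ, ej μ} : Finset ι) ≠ {ei ν, ej ν})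
    (hH1 : ∀ μ, Whid (ei μ) (ej μ) = 0)
    (hH2 : ∀ μ, Whid (ej μ) (ei μ) = 0)
    (hH3 : ∀ i, Whid i i = W i i
        + ∑ μ ∈ Finset.univ.filter (fun μ => ej μ = i), W (ei μ) (ej μ)
        + ∑ μ ∈ Finset.univ.filter (fun μ => ei μ = i), W (ej μ) (ei μ))
    (hH4 : ∀ i j, i ≠ j →
      (∀ μ, ¬(i = ei μ ∧ j = ej μ) ∧ ¬(i = ej μ ∧ j = ei μ)) → Whid i j = W i j) :
    W - Whid = ∑ μ, (jumpGenerator (ei μ) (ej μ) (W (ei μ) (ej μ))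
      + jumpGenerator (ej μ) (ei μ) (W (ej μ) (ei μ))) := by
  ext i j
  simp only [Matrix.sub_apply, Matrix.sum_apply, Matrix.add_apply, jumpGenerator, single_apply]
  by_cases hd : i = j
  · subst hd
    have h1 : ∀ μ, ¬(ei μ = i ∧ ej μ = i) := fun μ h => hij μ (h.1.trans h.2.symm)
    have h2 : ∀ μ, ¬(ej μ = i ∧ ei μ = i) := fun μ h => hij μ (h.2.trans h.1.symm)
    simp only [h1, h2, and_self, if_false, zero_sub, sum_add_distrib, sum_neg_distrib, hH3,
      sum_filter]
    abel
  rcases edge_trichotomy ei ej i j with ⟨ν, rfl, rfl⟩ | ⟨ν, rfl, rfl⟩ | hno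
  · rw [hH1, sub_zero, sum_eq_single ν]
    · simp [hij ν, (hij ν).symm]
    · intro μ _ hμ
      have := mt (eq_of_edge_eq hdist) hμ
      grind
    · simp
  · rw [hH2, sub_zero, sum_eq_single ν]
    · simp [hij ν, (hij ν).symm]
    · intro μ _ hμ
      have := mt (eq_of_edge_eq hdist) hμ
      grind
    · simp
  · rw [hH4 i j hd hno, sub_self]
    symm
    refine sum_eq_zero fun μ _ => ?_
    grind

theorem tilted_offDiag_nonneg (W T : Matrix ι ι ℝ) (Q : κ → ℝ)
    (hW : ∀ i j, i ≠ j → 0 ≤ W i j) (hij : ∀ μ, ei μ ≠ ej μ)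
    (hT1 : ∀ μ, T (ei μ) (ej μ) = W (ei μ) (ej μ) * Real.exp (-Q μ))
    (hT2 : ∀ μ, T (ej μ) (ei μ) = W (ej μ) (ei μ) * Real.exp (Q μ))
    (hT3 : ∀ i j, (∀ μ, ¬(i = ei μ ∧ j = ej μ) ∧ ¬(i = ej μ ∧ j = ei μ)) → T i j = W i j)
    {i j : ι} (hne : i ≠ j) : 0 ≤ T i j := by
  rcases edge_trichotomy ei ej i j with ⟨ν, rfl, rfl⟩ | ⟨ν, rfl, rfl⟩ | hno
  · rw [hT1]
    exact mul_nonneg (hW _ _ (hij ν)) (Real.exp_nonneg _)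
  · rw [hT2]
    exact mul_nonneg (hW _ _ (hij ν).symm) (Real.exp_nonneg _)
  · rw [hT3 i j hno]
    exact hW i j hne

theorem diagonal_mul_tilted_transpose_mul_inv_diagonal [Fintype ι] [DecidableEq ι]
    (W Whid T : Matrix ι ι ℝ) (hij : ∀ μ, ei μ ≠ ej μ)
    (hpos1 : ∀ μ, 0 < W (ei μ) (ej μ))
    (hpos2 : ∀ μ, 0 < W (ej μ) (ei μ))
    (hH1 : ∀ μ, Whid (ei μ) (ej μ) = 0)
    (hH2 : ∀ μ, Whid (ej μ) (ei μ) = 0)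
    (hH4 : ∀ i j, i ≠ j →
      (∀ μ, ¬(i = ei μ ∧ j = ej μ) ∧ ¬(i = ej μ ∧ j = ei μ)) → Whid i j = W i j)
    {p : ι → ℝ} (hp : ∀ i, 0 < p i) (Q : κ → ℝ)
    (hQ : ∀ μ, Q μ = Real.log (W (ei μ) (ej μ) * p (ej μ) / (W (ej μ) (ei μ) * p (ei μ))))
    (hT1 : ∀ μ, T (ei μ) (ej μ) = W (ei μ) (ej μ) * Real.exp (-Q μ))
    (hT2 : ∀ μ, T (ej μ) (ei μ) = W (ej μ) (ei μ) * Real.exp (Q μ))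
    (hT3 : ∀ i j, (∀ μ, ¬(i = ei μ ∧ j = ej μ) ∧ ¬(i = ej μ ∧ j = ei μ)) → T i j = W i j) :
    diagonal p * Tᵀ * (diagonal p)⁻¹ = (W - Whid) + diagonal p * Whidᵀ * (diagonal p)⁻¹ := by
  have hp0 : ∀ i, p i ≠ 0 := fun i => (hp i).ne'
  ext i j
  simp only [Matrix.add_apply, Matrix.sub_apply,
    diagonal_mul_transpose_mul_inv_diagonal_apply hp0]
  by_cases hd : i = j
  · subst hd
    rw [hT3 i i (by grind)]
    field_simp [hp0 i]
    ring
  rcases edge_trichotomy ei ej i j with ⟨ν, rfl, rfl⟩ | ⟨ν, rfl, rfl⟩ | hno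
  · rw [hT2, hQ, hH1, hH2, mul_zero, zero_div, sub_zero, add_zero]
    exact mul_mul_exp_log_div_eq (hpos1 ν) (hpos2 ν) (hp _) (hp _)
  · rw [hT1, hQ, ← Real.log_inv, inv_div, hH1, hH2, mul_zero, zero_div, sub_zero, add_zero]
    exact mul_mul_exp_log_div_eq (hpos2 ν) (hpos1 ν) (hp _) (hp _)
  · rw [hT3 j i (by grind), hH4 i j hd hno, hH4 j i (Ne.symm hd) (by grind)]
    ring

end Edges

theorem multi_edge_hidden_TR_is_MJPG_general {n m : ℕ}
    (W Whid : Matrix (Fin n) (Fin n) ℝ)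
    (hW1 : ∀ i j, i ≠ j → 0 ≤ W i j)
    (ei ej : Fin m → Fin n)
    (hij : ∀ μ, ei μ ≠ ej μ)
    (hdist : ∀ μ ν, μ ≠ ν → ({ei μ, ej μ} : Finset (Fin n)) ≠ {ei ν, ej ν})
    (hpos1 : ∀ μ, 0 < W (ei μ) (ej μ))
    (hpos2 : ∀ μ, 0 < W (ej μ) (ei μ))
    (hH1 : ∀ μ, Whid (ei μ) (ej μ) = 0)
    (hH2 : ∀ μ, Whid (ej μ) (ei μ) = 0)
    (hH3 : ∀ i, Whid i i = W i i
        + ∑ μ ∈ Finset.univ.filter (fun μ => ej μ = i), W (ei μ) (ej μ)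
        + ∑ μ ∈ Finset.univ.filter (fun μ => ei μ = i), W (ej μ) (ei μ))
    (hH4 : ∀ i j, i ≠ j →
      (∀ μ, ¬(i = ei μ ∧ j = ej μ) ∧ ¬(i = ej μ ∧ j = ei μ)) → Whid i j = W i j)
    (p : Fin n → ℝ) (hp1 : ∀ i, 0 < p i)
    (hp3 : Whid *ᵥ p = 0)
    (Q : Fin m → ℝ)
    (hQ : ∀ μ, Q μ = Real.log (W (ei μ) (ej μ) * p (ej μ) / (W (ej μ) (ei μ) * p (ei μ))))
    (M : (Fin m → ℝ) → Matrix (Fin n) (Fin n) ℝ)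
    (hM1 : ∀ q μ, M q (ei μ) (ej μ) = W (ei μ) (ej μ) * Real.exp (-q μ))
    (hM2 : ∀ q μ, M q (ej μ) (ei μ) = W (ej μ) (ei μ) * Real.exp (q μ))
    (hM3 : ∀ q i j, (∀ μ, ¬(i = ei μ ∧ j = ej μ) ∧ ¬(i = ej μ ∧ j = ei μ)) → M q i j = W i j) :
    (∀ i j, i ≠ j →
      0 ≤ (Matrix.diagonal p * (M Q)ᵀ * (Matrix.diagonal p)⁻¹) i j) ∧
    (∀ j, ∑ i, (Matrix.diagonal p * (M Q)ᵀ * (Matrix.diagonal p)⁻¹) i j = 0) ∧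
    Matrix.diagonal p * (M Q)ᵀ * (Matrix.diagonal p)⁻¹
      = (W - Whid) + Matrix.diagonal p * Whidᵀ * (Matrix.diagonal p)⁻¹ := by
  have hp0 : ∀ i, p i ≠ 0 := fun i => (hp1 i).ne'
  have hdecomp := diagonal_mul_tilted_transpose_mul_inv_diagonal W Whid (M Q) hij hpos1 hpos2
    hH1 hH2 hH4 hp1 Q hQ (hM1 Q) (hM2 Q) (hM3 Q)
  have hmar : ∀ j, ∑ i, (W - Whid) i j = 0 := fun j => by
    simp only [sub_eq_sum_jumpGenerator W Whid hij hdist hH1 hH2 hH3 hH4, Matrix.sum_apply,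
      Matrix.add_apply]
    rw [sum_comm]
    simp [sum_add_distrib, sum_jumpGenerator_apply]
  refine ⟨fun i j hne => ?_, fun j => ?_, hdecomp⟩
  · rw [diagonal_mul_transpose_mul_inv_diagonal_apply hp0]
    exact div_nonneg (mul_nonneg (hp1 i).le
      (tilted_offDiag_nonneg W (M Q) Q hW1 hij (hM1 Q) (hM2 Q) (hM3 Q) (Ne.symm hne))) (hp1 j).le
  · rw [hdecomp]
    simp only [Matrix.add_apply, sum_add_distrib, hmar,
      sum_diagonal_mul_transpose_mul_inv_diagonal_apply hp0, hp3, Pi.zero_apply, zero_div,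
      add_zero]

/-- The multi-edge hidden time-reversal generator is a Markov jump-process generator
(Theorem "unitary2"), and it decomposes as the marginal generator plus the
time reversal of the hidden generator. -/
theorem multi_edge_hidden_TR_is_MJPG {n m : ℕ}
    (W Whid : Matrix (Fin n) (Fin n) ℝ)
    (hW1 : ∀ i j, i ≠ j → 0 ≤ W i j)
    (hW2 : ∀ j, ∑ i, W i j = 0)
    (ei ej : Fin m → Fin n)
    (hij : ∀ μ, ei μ ≠ ej μ)
    (hdist : ∀ μ ν, μ ≠ ν → ({ei μ, ej μ} : Finset (Fin n)) ≠ {ei ν, ej ν})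
    (hpos1 : ∀ μ, 0 < W (ei μ) (ej μ))
    (hpos2 : ∀ μ, 0 < W (ej μ) (ei μ))
    (hH1 : ∀ μ, Whid (ei μ) (ej μ) = 0)
    (hH2 : ∀ μ, Whid (ej μ) (ei μ) = 0)
    (hH3 : ∀ i, Whid i i = W i i
        + ∑ μ ∈ Finset.univ.filter (fun μ => ej μ = i), W (ei μ) (ej μ)
        + ∑ μ ∈ Finset.univ.filter (fun μ => ei μ = i), W (ej μ) (ei μ))
    (hH4 : ∀ i j, i ≠ j →
      (∀ μ, ¬(i = ei μ ∧ j = ej μ) ∧ ¬(i = ej μ ∧ j = ei μ)) → Whid i j = W i j)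
    (p : Fin n → ℝ) (hp1 : ∀ i, 0 < p i) (hp2 : ∑ i, p i = 1)
    (hp3 : Whid *ᵥ p = 0)
    (Q : Fin m → ℝ)
    (hQ : ∀ μ, Q μ = Real.log (W (ei μ) (ej μ) * p (ej μ) / (W (ej μ) (ei μ) * p (ei μ))))
    (M : (Fin m → ℝ) → Matrix (Fin n) (Fin n) ℝ)
    (hM1 : ∀ q μ, M q (ei μ) (ej μ) = W (ei μ) (ej μ) * Real.exp (-q μ))
    (hM2 : ∀ q μ, M q (ej μ) (ei μ) = W (ej μ) (ei μ) * Real.exp (q μ))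
    (hM3 : ∀ q i j, (∀ μ, ¬(i = ei μ ∧ j = ej μ) ∧ ¬(i = ej μ ∧ j = ei μ)) → M q i j = W i j) :
    (∀ i j, i ≠ j →
      0 ≤ (Matrix.diagonal p * (M Q)ᵀ * (Matrix.diagonal p)⁻¹) i j) ∧
    (∀ j, ∑ i, (Matrix.diagonal p * (M Q)ᵀ * (Matrix.diagonal p)⁻¹) i j = 0) ∧
    Matrix.diagonal p * (M Q)ᵀ * (Matrix.diagonal p)⁻¹
      = (W - Whid) + Matrix.diagonal p * Whidᵀ * (Matrix.diagonal p)⁻¹ :=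
  multi_edge_hidden_TR_is_MJPG_general W Whid hW1 ei ej hij hdist hpos1 hpos2 hH1 hH2 hH3 hH4 p hp1
    hp3 Q hQ M hM1 hM2 hM3
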